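/- arXiv:2008.00713 — 3 statements merged into one kernel-verified Lean document; each statement's English description precedes it below -/
import Mathlib

section
/- The code is degenerate: a single Z₁ error on qutrit 0 and a single Z₁ error on qutrit 4 generate the same error state on every logical codeword, i.e. Z₁^(0)|i_L⟩ = Z₁^(4)|i_L⟩ for each i ∈ {0,1,2}, where M^(j) denotes the single-qutrit operator M applied at position j. -/
open Complex Matrix

noncomputable section

/-- ω = exp(2πi/3), a primitive cube root of unity. -/
def ω : ℂ := Complex.exp (2 * (Real.pi : ℂ) * Complex.I / 3)

/-- The ternary cyclic shift matrix: X₁ e_j = e_{(j+1) mod 3}. -/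
def X1 : Matrix (Fin 3) (Fin 3) ℂ := Matrix.of fun i j => if i = j + 1 then (1 : ℂ) else 0

/-- The ternary phase matrix Z₁ = diag(1, ω, ω²). -/
def Z1 : Matrix (Fin 3) (Fin 3) ℂ := Matrix.diagonal ![1, ω, ω ^ 2]

/-- X₂ = X₁·X₁. -/
def X2 : Matrix (Fin 3) (Fin 3) ℂ := X1 * X1

/-- Z₂ = Z₁·Z₁. -/
def Z2 : Matrix (Fin 3) (Fin 3) ℂ := Z1 * Z1

/-- The 7-qutrit state space. -/
abbrev V : Type := (Fin 7 → Fin 3) → ℂ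

/-- Standard basis vector of the 7-qutrit state space indexed by a ternary string. -/
def e (s : Fin 7 → Fin 3) : V := fun t => if t = s then 1 else 0

/-- Action on the 7-qutrit space of a tensor product M₀ ⊗ M₁ ⊗ … ⊗ M₆ of 3×3 matrices. -/
def act (M : Fin 7 → Matrix (Fin 3) (Fin 3) ℂ) (v : V) : V :=
  fun s => ∑ t : Fin 7 → Fin 3, (∏ j : Fin 7, M j (s j) (t j)) * v t

/-- `applyAt M j` applies the single-qutrit operator `M` at position `j` (identity elsewhere). -/
def applyAt (M : Matrix (Fin 3) (Fin 3) ℂ) (j : Fin 7) : V → V :=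
  act (fun k => if k = j then M else 1)

/-- The unnormalized logical codeword |0_L⟩. -/
def c0 : V :=
  e ![0,0,0,0,0,0,0] + e ![1,0,2,0,1,0,2] + e ![2,0,1,0,2,0,1]
    + e ![0,1,0,2,0,1,0] + e ![1,1,2,2,1,1,2] + e ![2,1,1,2,2,1,1]
    + e ![0,2,0,1,0,2,0] + e ![1,2,2,1,1,2,2] + e ![2,2,1,1,2,2,1]

/-- The unnormalized logical codeword |1_L⟩. -/
def c1 : V :=
  e ![1,1,1,1,1,1,1] + e ![2,1,0,1,2,1,0] + e ![0,1,2,1,0,1,2]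
    + e ![1,2,1,0,1,2,1] + e ![2,2,0,0,2,2,0] + e ![0,2,2,0,0,2,2]
    + e ![1,0,1,2,1,0,1] + e ![2,0,0,2,2,0,0] + e ![0,0,2,2,0,0,2]

/-- The unnormalized logical codeword |2_L⟩. -/
def c2 : V :=
  e ![2,2,2,2,2,2,2] + e ![0,2,1,2,0,2,1] + e ![1,2,0,2,1,2,0]
    + e ![2,0,2,1,2,0,2] + e ![0,0,1,1,0,0,1] + e ![1,0,0,1,1,0,0]
    + e ![2,1,2,0,2,1,2] + e ![0,1,1,0,0,1,1] + e ![1,1,0,0,1,1,0]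

/-- The three logical codewords. -/
def cw : Fin 3 → V := ![c0, c1, c2]

/-- Phase-error stabilizer S₁ = X₁⊗I⊗X₂⊗I⊗X₁⊗I⊗X₂. -/
def S1 : V → V := act ![X1, 1, X2, 1, X1, 1, X2]

/-- Phase-error stabilizer S₂ = I⊗X₁⊗I⊗X₂⊗I⊗X₁⊗I. -/
def S2 : V → V := act ![1, X1, 1, X2, 1, X1, 1]

/-- Bit-error stabilizer S₃ = Z₁⊗Z₂⊗Z₁⊗Z₂⊗I⊗I⊗I. -/
def S3 : V → V := act ![Z1, Z2, Z1, Z2, 1, 1, 1]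

/-- Bit-error stabilizer S₄ = I⊗I⊗I⊗Z₁⊗Z₂⊗Z₁⊗Z₂. -/
def S4 : V → V := act ![1, 1, 1, Z1, Z2, Z1, Z2]

/-- Bit-error stabilizer S₅ = I⊗Z₁⊗Z₂⊗Z₁⊗Z₂⊗I⊗I. -/
def S5 : V → V := act ![1, Z1, Z2, Z1, Z2, 1, 1]

/-- Bit-error stabilizer S₆ = I⊗I⊗Z₁⊗Z₂⊗Z₁⊗Z₂⊗I. -/
def S6 : V → V := act ![1, 1, Z1, Z2, Z1, Z2, 1]

/-! Z₁ is diagonal and every string in the support of a codeword has equal letters at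
positions 0 and 4, so Z₁ multiplies each basis component by the same phase whether it acts on
qutrit 0 or on qutrit 4. -/

theorem act_diagonal_apply (D : Fin 7 → Fin 3 → ℂ) (v : V) (s : Fin 7 → Fin 3) :
    act (fun k => diagonal (D k)) v s = (∏ k, D k (s k)) * v s := by
  rw [act, Finset.sum_eq_single s]
  · simp only [diagonal_apply_eq]
  · intro t _ hts
    obtain ⟨k, hk⟩ : ∃ k, s k ≠ t k := by
      by_contra! h
      exact hts (funext h).symm
    exact mul_eq_zero_of_left
      (Finset.prod_eq_zero (Finset.mem_univ k) (diagonal_apply_ne (D k) hk)) _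
  · exact absurd (Finset.mem_univ s)

theorem applyAt_diagonal_apply (d : Fin 3 → ℂ) (j : Fin 7) (v : V) (s : Fin 7 → Fin 3) :
    applyAt (diagonal d) j v s = d (s j) * v s := by
  have hdiag : (fun k => if k = j then diagonal d else 1) =
      fun k => diagonal (if k = j then d else 1) := by
    funext k
    split_ifs
    · rfl
    · exact diagonal_one.symm
  rw [applyAt, hdiag, act_diagonal_apply]
  congr 1
  rw [Finset.prod_eq_single j (fun k _ hk => by simp only [hk, if_false, Pi.one_apply])
    (absurd (Finset.mem_univ j)), if_pos rfl]

theorem applyAt_diagonal_eq_of_support (d : Fin 3 → ℂ) {i j : Fin 7} {v : V}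
    (hv : ∀ s, v s ≠ 0 → s i = s j) :
    applyAt (diagonal d) i v = applyAt (diagonal d) j v := by
  funext s
  rw [applyAt_diagonal_apply, applyAt_diagonal_apply]
  by_cases hs : v s = 0
  · rw [hs, mul_zero, mul_zero]
  · rw [hv s hs]

theorem e_apply_eq_zero_of_apply_ne {s t : Fin 7 → Fin 3} {i j : Fin 7}
    (ht : t i ≠ t j) (hs : s i = s j) : e s t = 0 :=
  if_neg fun hts => ht (by subst hts; exact hs)

theorem apply_zero_eq_apply_four_of_cw_ne_zero (k : Fin 3) (s : Fin 7 → Fin 3)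
    (hs : cw k s ≠ 0) : s 0 = s 4 := by
  by_contra h
  apply hs
  fin_cases k <;>
    simp (disch := decide) [cw, c0, c1, c2, e_apply_eq_zero_of_apply_ne h]

/-- Degeneracy: a single Z₁ error on qutrit 0 and a single Z₁ error on qutrit 4 generate
the same error state on every logical codeword. -/
theorem degenerate_Z1q0_eq_Z1q4 :
    ∀ i : Fin 3, applyAt Z1 0 (cw i) = applyAt Z1 4 (cw i) :=
  fun i => applyAt_diagonal_eq_of_support _ (apply_zero_eq_apply_four_of_cw_ne_zero i)
end
end

section
/- The encoding satisfies the necessary condition for quantum error correction: for every single-qutrit error σ ∈ {X₁, X₂, Z₁, Z₂, X₁Z₁, X₁Z₂, X₂Z₁, X₂Z₂} and every position j ∈ Fin 7, the three diagonal matrix elements agree: ⟨0_L| σ^(j) |0_L⟩ = ⟨1_L| σ^(j) |1_L⟩ = ⟨2_L| σ^(j) |2_L⟩, where ⟨·|·⟩ is the standard Hermitian inner product on V and M^(j) denotes M applied at position j. -/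
open Complex Matrix

noncomputable section

/-- The standard Hermitian inner product on the 7-qutrit state space. -/
def ip (u v : V) : ℂ := ∑ s : Fin 7 → Fin 3, (starRingEnd ℂ) (u s) * v s


/-! A single-qutrit operator changes a basis string in at most one position, so its matrix
element between two strings at Hamming distance at least 2 vanishes. The nine strings of each
logical codeword are pairwise at distance at least 2, hence `⟨i_L| M^(j) |i_L⟩ = ∑ₛ M (s j) (s j)`,
and in every position each symbol occurs in exactly three of them, so this is `3 • M.trace` for
every `i` and every `M`. -/

open Finset

lemma ip_e_left (a : Fin 7 → Fin 3) (v : V) : ip (e a) v = v a := by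
  simp [ip, e]

lemma ip_sum_left {ι : Type*} (s : Finset ι) (u : ι → V) (v : V) :
    ip (∑ i ∈ s, u i) v = ∑ i ∈ s, ip (u i) v := by
  simp only [ip, Finset.sum_apply, map_sum, Finset.sum_mul]
  exact Finset.sum_comm

lemma applyAt_sum {ι : Type*} (M : Matrix (Fin 3) (Fin 3) ℂ) (j : Fin 7) (s : Finset ι)
    (v : ι → V) : applyAt M j (∑ i ∈ s, v i) = ∑ i ∈ s, applyAt M j (v i) := by
  funext a
  simp only [applyAt, act, Finset.sum_apply, Finset.mul_sum]
  exact Finset.sum_comm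

lemma applyAt_e_apply (M : Matrix (Fin 3) (Fin 3) ℂ) (j : Fin 7) (a b : Fin 7 → Fin 3) :
    applyAt M j (e b) a = ∏ k, (if k = j then M else 1) (a k) (b k) := by
  simp [applyAt, act, e]

lemma applyAt_e_apply_self (M : Matrix (Fin 3) (Fin 3) ℂ) (j : Fin 7) (a : Fin 7 → Fin 3) :
    applyAt M j (e a) a = M (a j) (a j) := by
  rw [applyAt_e_apply, Fintype.prod_eq_single j fun k hk => by simp [hk]]
  simp

lemma applyAt_e_apply_eq_zero_of_two_le_hammingDist (M : Matrix (Fin 3) (Fin 3) ℂ) (j : Fin 7)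
    {a b : Fin 7 → Fin 3} (hab : 2 ≤ hammingDist a b) : applyAt M j (e b) a = 0 := by
  rw [applyAt_e_apply]
  by_contra h
  have agree : ∀ k ≠ j, a k = b k := fun k hk => by
    by_contra hne
    exact h (prod_eq_zero (mem_univ k) (by simp [hk, hne]))
  have : hammingDist a b ≤ 1 :=
    calc hammingDist a b ≤ #{j} := card_le_card fun k hk => by
          by_contra hkj
          exact (mem_filter.1 hk).2 (agree k (by simpa using hkj))
      _ = 1 := card_singleton j
  omega

theorem ip_sum_e_applyAt_sum_e {ι : Type*} [Fintype ι] (M : Matrix (Fin 3) (Fin 3) ℂ)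
    (j : Fin 7) (w : ι → Fin 7 → Fin 3) (hw : Pairwise fun p q => 2 ≤ hammingDist (w p) (w q)) :
    ip (∑ p, e (w p)) (applyAt M j (∑ p, e (w p))) = ∑ p, M (w p j) (w p j) := by
  simp only [ip_sum_left, ip_e_left, applyAt_sum, Finset.sum_apply]
  refine sum_congr rfl fun p _ => ?_
  rw [Fintype.sum_eq_single p fun q hq =>
      applyAt_e_apply_eq_zero_of_two_le_hammingDist M j (hw hq.symm),
    applyAt_e_apply_self]

lemma Fintype.sum_comp_eq_nsmul_sum {ι β M : Type*} [Fintype ι] [Fintype β] [DecidableEq β]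
    [AddCommMonoid M] (f : β → M) (g : ι → β) {n : ℕ} (hg : ∀ b, #{i | g i = b} = n) :
    ∑ i, f (g i) = n • ∑ b, f b := by
  rw [← Finset.sum_fiberwise' univ g f, smul_sum]
  simp [hg]

/-- The support of `|i_L⟩` is the coset `i·1111111 + span {0102010, 1020102}` in `𝔽₃⁷`. -/
def logicalString (i : Fin 3) (p : Fin 3 × Fin 3) : Fin 7 → Fin 3 :=
  fun k => p.1 * ![0, 1, 0, 2, 0, 1, 0] k + p.2 * ![1, 0, 2, 0, 1, 0, 2] k + i

lemma pairwise_two_le_hammingDist_logicalString (i : Fin 3) :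
    Pairwise fun p q => 2 ≤ hammingDist (logicalString i p) (logicalString i q) := by
  unfold Pairwise
  revert i
  decide

lemma card_logicalString_apply_eq (i : Fin 3) (j : Fin 7) (x : Fin 3) :
    #{p | logicalString i p j = x} = 3 := by
  revert i j x
  decide

lemma cw_eq_sum_e_logicalString (i : Fin 3) : cw i = ∑ p, e (logicalString i p) := by
  simp only [Fintype.sum_prod_type, Fin.sum_univ_three, add_assoc]
  fin_cases i <;> simp only [cw, c0, c1, c2, add_assoc, Fin.reduceFinMk, Matrix.cons_val] <;>
    repeat' apply congrArg₂ (HAdd.hAdd : V → V → V)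
  all_goals exact congrArg e (by decide)

lemma ip_cw_applyAt_cw (M : Matrix (Fin 3) (Fin 3) ℂ) (j : Fin 7) (i : Fin 3) :
    ip (cw i) (applyAt M j (cw i)) = 3 • M.trace := by
  rw [cw_eq_sum_e_logicalString,
    ip_sum_e_applyAt_sum_e M j _ (pairwise_two_le_hammingDist_logicalString i),
    Fintype.sum_comp_eq_nsmul_sum (fun x => M x x) (fun p => logicalString i p j)
      (card_logicalString_apply_eq i j)]
  rfl

/-- Necessary condition for error correction: for every single-qutrit error σ in
{X₁, X₂, Z₁, Z₂, X₁Z₁, X₁Z₂, X₂Z₁, X₂Z₂} and every position j, the three diagonal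
matrix elements ⟨i_L| σ^(j) |i_L⟩ agree. -/
theorem necessary_condition_diagonal_elements :
    ∀ σ ∈ ({X1, X2, Z1, Z2, X1 * Z1, X1 * Z2, X2 * Z1, X2 * Z2} :
        Set (Matrix (Fin 3) (Fin 3) ℂ)),
      ∀ j : Fin 7,
        ip c0 (applyAt σ j c0) = ip c1 (applyAt σ j c1) ∧
        ip c1 (applyAt σ j c1) = ip c2 (applyAt σ j c2) := by
  intro σ _ j
  exact ⟨(ip_cw_applyAt_cw σ j 0).trans (ip_cw_applyAt_cw σ j 1).symm,
    (ip_cw_applyAt_cw σ j 1).trans (ip_cw_applyAt_cw σ j 2).symm⟩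
end
end

section
/- The weight-2 operator W = Z₁⊗I⊗Z₁⊗I⊗I⊗I⊗I commutes with all six stabilizers: W·S_k = S_k·W for every k ∈ {1,2,3,4,5,6}. (This witnesses that the code distance is less than 3 in the usual sense.) -/
open Complex Matrix

noncomputable section

/-- The weight-2 operator W = Z₁⊗I⊗Z₁⊗I⊗I⊗I⊗I. -/
def W : V → V := act ![Z1, 1, Z1, 1, 1, 1, 1]

/-!
Tensor products multiply factorwise, so `W` commutes with a stabilizer as soon as each factor of
`W` commutes with the corresponding factor of the stabilizer up to a scalar, the scalars having
product `1`. Against the `Z`-type stabilizers all factors commute outright. Against `S₁` the only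
clashes are `Z₁X₁ = ω X₁Z₁` at qutrit 0 and `Z₁X₂ = ω² X₂Z₁` at qutrit 2, and `ω · ω² = 1`.
-/

/-- The matrix of the tensor product `⨂ⱼ M j` in the basis indexed by strings `ι → m`. -/
def piKronecker {ι m n R : Type*} [Fintype ι] [CommMonoid R] (M : ι → Matrix m n R) :
    Matrix (ι → m) (ι → n) R :=
  of fun s t => ∏ j, M j (s j) (t j)

section piKronecker

variable {ι l m n R : Type*} [Fintype ι] [CommSemiring R]

theorem piKronecker_smul (c : ι → R) (M : ι → Matrix m n R) :
    piKronecker (fun j => c j • M j) = (∏ j, c j) • piKronecker M := by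
  ext s t
  simp only [piKronecker, Matrix.smul_apply, of_apply, smul_eq_mul, Finset.prod_mul_distrib]

theorem piKronecker_mul [DecidableEq ι] [Fintype m] (M : ι → Matrix l m R)
    (N : ι → Matrix m n R) :
    piKronecker M * piKronecker N = piKronecker fun j => M j * N j := by
  ext s t
  simp only [piKronecker, mul_apply, of_apply, Finset.prod_univ_sum, Fintype.piFinset_univ,
    Finset.prod_mul_distrib]

end piKronecker

theorem act_eq_piKronecker_mulVec (M : Fin 7 → Matrix (Fin 3) (Fin 3) ℂ) (v : V) :
    act M v = piKronecker M *ᵥ v :=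
  rfl

theorem act_act (M N : Fin 7 → Matrix (Fin 3) (Fin 3) ℂ) (v : V) :
    act M (act N v) = act (fun j => M j * N j) v := by
  simp only [act_eq_piKronecker_mulVec, mulVec_mulVec, piKronecker_mul]

theorem act_act_comm_of_mul_eq_smul (M N : Fin 7 → Matrix (Fin 3) (Fin 3) ℂ) (c : Fin 7 → ℂ)
    (h : ∀ j, M j * N j = c j • (N j * M j)) (hc : ∏ j, c j = 1) (v : V) :
    act M (act N v) = act N (act M v) := by
  rw [act_act, act_act, funext h, act_eq_piKronecker_mulVec, piKronecker_smul, hc, one_smul]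
  rfl

theorem act_act_comm_of_commute (M N : Fin 7 → Matrix (Fin 3) (Fin 3) ℂ)
    (h : ∀ j, Commute (M j) (N j)) (v : V) :
    act M (act N v) = act N (act M v) :=
  act_act_comm_of_mul_eq_smul M N 1 (fun j => by simpa using (h j).eq) (by simp) v

theorem ω_pow_three : ω ^ 3 = 1 := by
  simpa [ω] using (Complex.isPrimitiveRoot_exp 3 (by norm_num)).pow_eq_one

theorem Z1_mul_X1 : Z1 * X1 = ω • (X1 * Z1) := by
  ext i j
  fin_cases i <;> fin_cases j <;>
    simp [Z1, X1, mul_apply, Fin.sum_univ_three] <;>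
    first | linear_combination -ω_pow_three | ring

theorem Z1_mul_X2 : Z1 * X2 = ω ^ 2 • (X2 * Z1) := by
  simp only [X2, ← mul_assoc, Z1_mul_X1, smul_mul_assoc, mul_assoc X1 Z1, mul_smul_comm,
    smul_smul, sq]

theorem commute_Z1_Z2 : Commute Z1 Z2 :=
  (Commute.refl Z1).mul_right (Commute.refl Z1)

/-- W commutes with all six stabilizers, witnessing that the code distance is < 3. -/
theorem weight_two_operator_commutes :
    (∀ v : V, W (S1 v) = S1 (W v)) ∧
    (∀ v : V, W (S2 v) = S2 (W v)) ∧
    (∀ v : V, W (S3 v) = S3 (W v)) ∧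
    (∀ v : V, W (S4 v) = S4 (W v)) ∧
    (∀ v : V, W (S5 v) = S5 (W v)) ∧
    (∀ v : V, W (S6 v) = S6 (W v)) := by
  refine ⟨act_act_comm_of_mul_eq_smul _ _ ![ω, 1, ω ^ 2, 1, 1, 1, 1] ?_ ?_, ?_, ?_, ?_, ?_, ?_⟩
  · intro j
    fin_cases j <;> simp [Z1_mul_X1, Z1_mul_X2]
  · simp [Fin.prod_univ_seven, ← pow_succ', ω_pow_three]
  all_goals
    refine act_act_comm_of_commute _ _ fun j => ?_
    fin_cases j <;> simp [commute_Z1_Z2]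
end
end
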